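/- arXiv:1607.02834 — 4 statements merged into one kernel-verified Lean document; each statement's English description precedes it below -/
import Mathlib

section
/- Define h(α,γ) = ln(2γ)/α + (α/2)·γ·(1-γ) for α > 0 and γ ∈ [1/2, 1]. For fixed α > √2, h(α,·) attains its unique maximum on [1/2,1] at γ(α) = (1/2 + √(1/4 + 4/α²))/2, and for 0 < α ≤ √2 the maximum is attained at γ = 1. -/
/-!
Up to the factor `α / γ`, the derivative `∂h/∂γ = 1/(αγ) + α/2 - αγ` is the concave quadratic
`1/α² + γ/2 - γ²`, whose positive root is `γopt α > 1/2`. Hence `h α` increases strictly up to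
`γopt α` and decreases strictly after it. Since `γopt α * (γopt α - 1/2) = 1/α²`, we have
`γopt α < 1` exactly when `1/α² < 1/2`, i.e. when `α > √2`; otherwise `h α` is increasing on
all of `[1/2, 1]`.
-/

noncomputable def h (α γ : ℝ) : ℝ := Real.log (2 * γ) / α + (α / 2) * γ * (1 - γ)

noncomputable def γopt (α : ℝ) : ℝ := (1 / 2 + Real.sqrt (1 / 4 + 4 / α ^ 2)) / 2

open Set

section LinearOrder

variable {α β : Type*} [LinearOrder α] [Preorder β]

lemma lt_of_strictMonoOn_Icc_of_strictAntiOn_Icc {f : α → β} {a c b x : α}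
    (hmono : StrictMonoOn f (Icc a c)) (hanti : StrictAntiOn f (Icc c b))
    (hac : a ≤ c) (hcb : c ≤ b) (hx : x ∈ Icc a b) (hxc : x ≠ c) : f x < f c := by
  rcases hxc.lt_or_gt with hlt | hgt
  · exact hmono ⟨hx.1, hlt.le⟩ ⟨hac, le_rfl⟩ hlt
  · exact hanti ⟨le_rfl, hcb⟩ ⟨hgt.le, hx.2⟩ hgt

end LinearOrder

lemma hasDerivAt_h {α γ : ℝ} (hα : α ≠ 0) (hγ : 0 < γ) :
    HasDerivAt (h α) (1 / (α * γ) + α / 2 - α * γ) γ := by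
  have hlog : HasDerivAt (fun x : ℝ => Real.log (2 * x)) (2 / (2 * γ)) γ :=
    ((hasDerivAt_id γ).const_mul 2).log (by positivity) |>.congr_deriv (by simp)
  have hquad : HasDerivAt (fun x : ℝ => α / 2 * x * (1 - x)) (α / 2 * (1 - γ) - α / 2 * γ) γ :=
    ((hasDerivAt_id γ).const_mul (α / 2)).mul ((hasDerivAt_const γ 1).sub (hasDerivAt_id γ))
      |>.congr_deriv (by simp; ring)
  refine ((hlog.div_const α).add hquad).congr_deriv ?_
  field_simp
  ring

lemma one_half_lt_γopt {α : ℝ} (hα : α ≠ 0) : 1 / 2 < γopt α := by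
  have : Real.sqrt (1 / 4) < Real.sqrt (1 / 4 + 4 / α ^ 2) :=
    Real.sqrt_lt_sqrt (by norm_num) (lt_add_of_pos_right _ (by positivity))
  rw [show Real.sqrt (1 / 4) = 1 / 2 by rw [Real.sqrt_eq_iff_mul_self_eq] <;> norm_num] at this
  unfold γopt
  linarith

lemma γopt_mul_γopt_sub_one_half (α : ℝ) : γopt α * (γopt α - 1 / 2) = 1 / α ^ 2 := by
  have hs := Real.sq_sqrt (show 0 ≤ 1 / 4 + 4 / α ^ 2 by positivity)
  unfold γopt
  linear_combination hs / 4

lemma γopt_lt_one_iff {α : ℝ} (hα : 0 < α) : γopt α < 1 ↔ Real.sqrt 2 < α := by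
  have hg := one_half_lt_γopt hα.ne'
  have hprod := γopt_mul_γopt_sub_one_half α
  rw [Real.sqrt_lt' hα]
  constructor
  · intro hlt
    have : 1 / α ^ 2 < 1 / 2 := by rw [← hprod]; nlinarith
    rwa [one_div_lt_one_div (by positivity) two_pos] at this
  · intro hα2
    have : 1 / α ^ 2 < 1 / 2 := by rwa [one_div_lt_one_div (by positivity) two_pos]
    nlinarith

lemma deriv_h_eq {α γ : ℝ} (hα : α ≠ 0) (hγ : 0 < γ) :
    deriv (h α) γ = α * (γopt α - γ) * (γ + γopt α - 1 / 2) / γ := by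
  rw [(hasDerivAt_h hα hγ).deriv]
  have hprod := γopt_mul_γopt_sub_one_half α
  rw [eq_div_iff (pow_ne_zero 2 hα)] at hprod
  field_simp
  linear_combination (-2) * hprod

lemma continuousOn_h {α : ℝ} (hα : α ≠ 0) {s : Set ℝ} (hs : s ⊆ Ioi 0) : ContinuousOn (h α) s :=
  fun _ hx ↦ (hasDerivAt_h hα (hs hx)).continuousAt.continuousWithinAt

lemma strictMonoOn_h {α : ℝ} (hα : 0 < α) : StrictMonoOn (h α) (Icc (1 / 2) (γopt α)) := by
  have hg := one_half_lt_γopt hα.ne'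
  refine strictMonoOn_of_deriv_pos (convex_Icc _ _)
    (continuousOn_h hα.ne' fun _ hx ↦ one_half_pos.trans_le hx.1) fun x hx ↦ ?_
  rw [interior_Icc] at hx
  rw [deriv_h_eq hα.ne' (by linarith [hx.1])]
  have : 0 < γopt α - x := by linarith [hx.2]
  have : 0 < x + γopt α - 1 / 2 := by linarith [hx.1]
  have : 0 < x := by linarith [hx.1]
  positivity

lemma strictAntiOn_h {α : ℝ} (hα : 0 < α) : StrictAntiOn (h α) (Ici (γopt α)) := by
  have hg := one_half_lt_γopt hα.ne'
  refine strictAntiOn_of_deriv_neg (convex_Ici _)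
    (continuousOn_h hα.ne' fun _ hx ↦ one_half_pos.trans_le (hg.le.trans hx)) fun x hx ↦ ?_
  rw [interior_Ici, mem_Ioi] at hx
  rw [deriv_h_eq hα.ne' (by linarith)]
  have : 0 < x + γopt α - 1 / 2 := by linarith
  refine div_neg_of_neg_of_pos ?_ (by linarith)
  exact mul_neg_of_neg_of_pos (mul_neg_of_pos_of_neg hα (by linarith)) this

theorem stmt_10 (α : ℝ) :
    (Real.sqrt 2 < α →
      γopt α ∈ Set.Icc (1/2 : ℝ) 1 ∧
      (∀ γ ∈ Set.Icc (1/2 : ℝ) 1, h α γ ≤ h α (γopt α)) ∧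
      (∀ γ ∈ Set.Icc (1/2 : ℝ) 1, γ ≠ γopt α → h α γ < h α (γopt α))) ∧
    (0 < α → α ≤ Real.sqrt 2 →
      ∀ γ ∈ Set.Icc (1/2 : ℝ) 1, h α γ ≤ h α 1) := by
  refine ⟨fun hα2 ↦ ?_, fun hα hα2 ↦ ?_⟩
  · have hα : 0 < α := (Real.sqrt_nonneg 2).trans_lt hα2
    have hmem : γopt α ∈ Icc (1 / 2 : ℝ) 1 :=
      ⟨(one_half_lt_γopt hα.ne').le, ((γopt_lt_one_iff hα).mpr hα2).le⟩
    have hlt : ∀ γ ∈ Icc (1 / 2 : ℝ) 1, γ ≠ γopt α → h α γ < h α (γopt α) :=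
      fun γ hγ ↦ lt_of_strictMonoOn_Icc_of_strictAntiOn_Icc (strictMonoOn_h hα)
        ((strictAntiOn_h hα).mono Icc_subset_Ici_self) hmem.1 hmem.2 hγ
    refine ⟨hmem, fun γ hγ ↦ ?_, hlt⟩
    rcases eq_or_ne γ (γopt α) with rfl | hne
    exacts [le_rfl, (hlt γ hγ hne).le]
  · have hle : 1 ≤ γopt α := not_lt.mp (mt (γopt_lt_one_iff hα).mp hα2.not_gt)
    intro γ hγ
    exact (strictMonoOn_h hα).monotoneOn ⟨hγ.1, hγ.2.trans hle⟩ ⟨by norm_num, hle⟩ hγ.2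
end

section
/- The system of equations α² = 2·ln(2γ)/(γ(1-γ)) and α² = 1/(γ(γ-1/2)) in variables α > √2, γ ∈ (1/2,1) has a unique solution, and at this solution ln(2γ)/α + (α/2)γ(1-γ) ∈ (0.390, 0.392). -/
/-!
Dividing the two equations eliminates `α`: a solution satisfies `2 (γ - 1/2) log (2γ) = 1 - γ`,
whose left-hand side minus right-hand side is strictly increasing in `γ ≥ 1/2`, and `α` is then
forced to be `(γ (γ - 1/2))^(-1/2)`, which exceeds `√2` exactly because `γ < 1`. Evaluating at
`γ = 0.7685` and `γ = 0.769` traps the root. At a solution the two terms of `h` are equal, so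
`h = α γ (1 - γ)` and `h² = γ (1 - γ)² / (γ - 1/2)`, which on the trapping interval lies
between `0.390²` and `0.392²`.
-/

open Real Set Finset

lemma abs_log_inv_one_sub_sub_sum_le {x : ℝ} (hx₀ : 0 ≤ x) (hx₁ : x < 1) (n : ℕ) :
    |log (1 - x)⁻¹ - ∑ i ∈ range n, x ^ (i + 1) / (i + 1)| ≤ x ^ (n + 1) / (1 - x) := by
  have h := abs_log_sub_add_sum_range_le (show |x| < 1 by rwa [abs_of_nonneg hx₀]) n
  rw [abs_of_nonneg hx₀, ← abs_neg] at h
  rwa [log_inv, ← neg_add', add_comm]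

lemma log_1537_div_1000_lt : log (1537 / 1000) < 0.43 := by
  have h := (abs_le.mp (abs_log_inv_one_sub_sub_sum_le (x := 537 / 1537)
    (by norm_num) (by norm_num) 8)).2
  norm_num [sum_range_succ] at h ⊢
  linarith

lemma lt_log_1538_div_1000 : 0.43 < log (1538 / 1000) := by
  have h := (abs_le.mp (abs_log_inv_one_sub_sub_sum_le (x := 269 / 769)
    (by norm_num) (by norm_num) 8)).1
  norm_num [sum_range_succ] at h ⊢
  linarith

noncomputable def eliminant (γ : ℝ) : ℝ := 2 * (γ - 1 / 2) * log (2 * γ) - (1 - γ)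

lemma strictMonoOn_eliminant : StrictMonoOn eliminant (Ici (1 / 2)) := by
  intro x (hx : 1 / 2 ≤ x) y _ hxy
  have hlog : log (2 * x) ≤ log (2 * y) := log_le_log (by linarith) (by linarith)
  have := mul_le_mul (by linarith : 2 * (x - 1 / 2) ≤ 2 * (y - 1 / 2)) hlog
    (log_nonneg (by linarith)) (by linarith)
  unfold eliminant
  linarith

lemma continuousOn_eliminant : ContinuousOn eliminant (Ioi 0) := by
  have : ContinuousOn (fun γ : ℝ => log (2 * γ)) (Ioi 0) :=
    (continuousOn_const.mul continuousOn_id).log fun _ hγ => (mul_pos two_pos hγ).ne'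
  unfold eliminant
  fun_prop

lemma eliminant_1537_div_2000_neg : eliminant (1537 / 2000) < 0 := by
  have := log_1537_div_1000_lt
  norm_num [eliminant]
  linarith

lemma eliminant_769_div_1000_pos : 0 < eliminant (769 / 1000) := by
  have := lt_log_1538_div_1000
  norm_num [eliminant]
  linarith

lemma exists_eliminant_eq_zero : ∃ γ ∈ Icc (1537 / 2000 : ℝ) (769 / 1000), eliminant γ = 0 :=
  intermediate_value_Icc (by norm_num)
    (continuousOn_eliminant.mono fun γ hγ => show (0 : ℝ) < γ by linarith [hγ.1])
    ⟨eliminant_1537_div_2000_neg.le, eliminant_769_div_1000_pos.le⟩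

lemma mem_Icc_of_eliminant_eq_zero {γ : ℝ} (hγ : 1 / 2 ≤ γ) (h : eliminant γ = 0) :
    γ ∈ Icc (1537 / 2000 : ℝ) (769 / 1000) := by
  constructor <;> by_contra! hlt
  · exact (strictMonoOn_eliminant hγ (by norm_num : (1 / 2 : ℝ) ≤ 1537 / 2000) hlt).not_ge
      (h ▸ eliminant_1537_div_2000_neg.le)
  · exact (strictMonoOn_eliminant (by norm_num : (1 / 2 : ℝ) ≤ 769 / 1000) hγ hlt).not_ge
      (h ▸ eliminant_769_div_1000_pos.le)

/-- The objective `h(α, γ)` of the minimax problem. -/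
noncomputable def regret (α γ : ℝ) : ℝ := log (2 * γ) / α + α / 2 * γ * (1 - γ)

/-- The conditions `∂h/∂α = 0` and `∂h/∂γ = 0` for `h = regret`, each solved for `α²`. -/
def IsSaddlePoint (α γ : ℝ) : Prop :=
  √2 < α ∧ γ ∈ Ioo (1 / 2 : ℝ) 1 ∧
    α ^ 2 = 2 * log (2 * γ) / (γ * (1 - γ)) ∧ α ^ 2 = 1 / (γ * (γ - 1 / 2))

lemma isSaddlePoint_iff {α γ : ℝ} :
    IsSaddlePoint α γ ↔
      γ ∈ Ioo (1 / 2 : ℝ) 1 ∧ eliminant γ = 0 ∧ α = √(1 / (γ * (γ - 1 / 2))) := by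
  constructor
  · rintro ⟨hα, hγ, h₁, h₂⟩
    have hd₁ : γ * (1 - γ) ≠ 0 := (mul_pos (by linarith [hγ.1]) (by linarith [hγ.2])).ne'
    have hd₂ : γ * (γ - 1 / 2) ≠ 0 := (mul_pos (by linarith [hγ.1]) (by linarith [hγ.1])).ne'
    have h := (div_eq_div_iff hd₁ hd₂).1 (h₁.symm.trans h₂)
    have hγF : γ * eliminant γ = 0 := by unfold eliminant; linear_combination h
    refine ⟨hγ, (mul_eq_zero.1 hγF).resolve_left (by linarith [hγ.1]), ?_⟩
    rw [← h₂, sqrt_sq ((sqrt_nonneg 2).trans hα.le)]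
  · rintro ⟨hγ, hF, rfl⟩
    have hd₁ : γ * (1 - γ) ≠ 0 := (mul_pos (by linarith [hγ.1]) (by linarith [hγ.2])).ne'
    have hd₂ : 0 < γ * (γ - 1 / 2) := mul_pos (by linarith [hγ.1]) (by linarith [hγ.1])
    have hsq : √(1 / (γ * (γ - 1 / 2))) ^ 2 = 1 / (γ * (γ - 1 / 2)) := sq_sqrt (by positivity)
    refine ⟨sqrt_lt_sqrt zero_le_two ((lt_div_iff₀ hd₂).2 ?_), hγ, ?_, hsq⟩
    · nlinarith [hγ.1, hγ.2]
    · rw [hsq, div_eq_div_iff hd₂.ne' hd₁]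
      unfold eliminant at hF
      linear_combination -γ * hF

lemma regret_mem_Ioo_of_isSaddlePoint {α γ : ℝ} (h : IsSaddlePoint α γ) :
    regret α γ ∈ Ioo (0.390 : ℝ) 0.392 := by
  obtain ⟨hγ, hF, -⟩ := isSaddlePoint_iff.1 h
  obtain ⟨hα, -, h₁, h₂⟩ := h
  have hα₀ : 0 < α := (sqrt_nonneg 2).trans_lt hα
  obtain ⟨hγ₁, hγ₂⟩ := mem_Icc_of_eliminant_eq_zero hγ.1.le hF
  have hd₁ : γ * (1 - γ) ≠ 0 := (mul_pos (by linarith) (by linarith)).ne'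
  have hd₂ : γ * (γ - 1 / 2) ≠ 0 := (mul_pos (by linarith) (by linarith)).ne'
  have hE₁ : α ^ 2 * (γ * (1 - γ)) = 2 * log (2 * γ) := by rw [h₁, div_mul_cancel₀ _ hd₁]
  have hE₂ : α ^ 2 * (γ * (γ - 1 / 2)) = 1 := by rw [h₂, div_mul_cancel₀ _ hd₂]
  have hV : regret α γ = α * γ * (1 - γ) := by
    have hterms : log (2 * γ) / α = α / 2 * γ * (1 - γ) := by
      rw [div_eq_iff hα₀.ne']
      linear_combination -hE₁ / 2
    rw [regret, hterms]
    ring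
  have hV₀ : 0 < α * γ * (1 - γ) := mul_pos (mul_pos hα₀ (by linarith)) (by linarith)
  have hVsq : (α * γ * (1 - γ)) ^ 2 * (γ - 1 / 2) = γ * (1 - γ) ^ 2 := by
    linear_combination γ * (1 - γ) ^ 2 * hE₂
  rw [hV]
  constructor <;> nlinarith [mul_nonneg (sub_nonneg.2 hγ₁) (sub_nonneg.2 hγ₂)]

theorem stmt_12 :
    (∃! p : ℝ × ℝ, Real.sqrt 2 < p.1 ∧ p.2 ∈ Set.Ioo (1/2 : ℝ) 1 ∧
      p.1 ^ 2 = 2 * Real.log (2 * p.2) / (p.2 * (1 - p.2)) ∧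
      p.1 ^ 2 = 1 / (p.2 * (p.2 - 1/2))) ∧
    (∀ p : ℝ × ℝ, Real.sqrt 2 < p.1 → p.2 ∈ Set.Ioo (1/2 : ℝ) 1 →
      p.1 ^ 2 = 2 * Real.log (2 * p.2) / (p.2 * (1 - p.2)) →
      p.1 ^ 2 = 1 / (p.2 * (p.2 - 1/2)) →
      Real.log (2 * p.2) / p.1 + (p.1 / 2) * p.2 * (1 - p.2) ∈ Set.Ioo (0.390 : ℝ) 0.392) := by
  refine ⟨?_, fun p hα hγ h₁ h₂ => regret_mem_Ioo_of_isSaddlePoint ⟨hα, hγ, h₁, h₂⟩⟩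
  obtain ⟨γ₀, hγ₀, hF₀⟩ := exists_eliminant_eq_zero
  have hγ₀' : γ₀ ∈ Ioo (1 / 2 : ℝ) 1 := ⟨by linarith [hγ₀.1], by linarith [hγ₀.2]⟩
  refine ⟨(√(1 / (γ₀ * (γ₀ - 1 / 2))), γ₀), isSaddlePoint_iff.2 ⟨hγ₀', hF₀, rfl⟩, ?_⟩
  rintro ⟨α, γ⟩ (h : IsSaddlePoint α γ)
  obtain ⟨hγ, hF, rfl⟩ := isSaddlePoint_iff.1 h
  obtain rfl : γ = γ₀ := strictMonoOn_eliminant.injOn hγ.1.le hγ₀'.1.le (hF.trans hF₀.symm)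
  rfl
end

section
/- For all α > √2, letting γ(α) = (1/2 + √(1/4+4/α²))/2, we have h(α, γ(α)) ≥ 0.390, where h(α,γ) = ln(2γ)/α + (α/2)γ(1-γ); moreover for 0 < α ≤ √2, h(α,1) = ln(2)/α ≥ ln(2)/√2 > 0.390. -/
open Real

lemma Real.log_add_one_sub_div_le_log {c x : ℝ} (hc : 0 < c) (hx : 0 < x) :
    log c + 1 - c / x ≤ log x := by
  have := one_sub_inv_le_log_of_pos (div_pos hx hc)
  rw [inv_div, log_div hx.ne' hc.ne'] at this
  linarith

lemma Real.exp_le_inv_one_sub_div_pow {x : ℝ} {n : ℕ} (hx : x < n) :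
    exp x ≤ ((1 - x / n)⁻¹) ^ n := by
  rcases Nat.eq_zero_or_pos n with rfl | hn
  · simpa using hx.le
  replace hn : (0 : ℝ) < n := by exact_mod_cast hn
  have hpos : 0 < 1 - x / n := by rw [sub_pos, div_lt_one hn]; exact hx
  have hstep : exp (x / n) ≤ (1 - x / n)⁻¹ := by
    rw [le_inv_comm₀ (exp_pos _) hpos, ← exp_neg]
    linarith [add_one_le_exp (-(x / n))]
  calc exp x = exp (x / n) ^ n := by rw [← exp_nat_mul, mul_div_cancel₀ _ hn.ne']
    _ ≤ ((1 - x / n)⁻¹) ^ n := pow_le_pow_left₀ (exp_pos _).le hstep n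

lemma log_one_point_five_four_ge : (0.4297 : ℝ) ≤ log 1.54 := by
  rw [le_log_iff_exp_le (by norm_num)]
  calc exp 0.4297 ≤ ((1 - 0.4297 / ((64 : ℕ) : ℝ))⁻¹) ^ 64 :=
        exp_le_inv_one_sub_div_pow (by norm_num)
    _ ≤ 1.54 := by norm_num

lemma half_le_γopt (α : ℝ) : 1 / 2 ≤ γopt α := by
  have : 1 / 2 ≤ √(1 / 4 + 4 / α ^ 2) :=
    (le_sqrt (by norm_num) (by positivity)).mpr (by nlinarith [div_nonneg zero_le_four (sq_nonneg α)])
  unfold γopt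
  linarith

lemma sq_mul_γopt_mul_two_mul_γopt_sub_one {α : ℝ} (hα : α ≠ 0) :
    α ^ 2 * (γopt α * (2 * γopt α - 1)) = 2 := by
  have hsq : √(1 / 4 + 4 / α ^ 2) ^ 2 = 1 / 4 + 4 / α ^ 2 := sq_sqrt (by positivity)
  have : γopt α * (2 * γopt α - 1) = 2 / α ^ 2 := by
    unfold γopt
    linear_combination (1 / 2) * hsq
  rw [this]
  field_simp

lemma h_ge_of_sq_mul_mul_two_mul_sub_one {α γ : ℝ} (hα : 0 < α) (hγ : 0 < γ)
    (hrel : α ^ 2 * (γ * (2 * γ - 1)) = 2) : h α γ ≥ 0.390 := by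
  have hinv : 0.77 / γ = 0.77 * (α ^ 2 * (2 * γ - 1) / 2) := by
    rw [div_eq_iff hγ.ne']
    linear_combination -0.385 * hrel
  have hlog : log 1.54 + 1 - 0.77 * (α ^ 2 * (2 * γ - 1) / 2) ≤ log (2 * γ) := by
    rw [← hinv, show (1.54 : ℝ) = 2 * 0.77 by norm_num, show 0.77 / γ = 2 * 0.77 / (2 * γ) by
      field_simp]
    exact log_add_one_sub_div_le_log (by norm_num) (by positivity)
  have key : 0.390 * α ≤ log (2 * γ) + α ^ 2 / 2 * (γ * (1 - γ)) := by
    nlinarith [log_one_point_five_four_ge, sq_nonneg (α * (γ - 0.77)),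
      sq_nonneg (0.1771 * α - 0.39)]
  have hh : h α γ = (log (2 * γ) + α ^ 2 / 2 * (γ * (1 - γ))) / α := by
    unfold h
    field_simp
  rw [hh, ge_iff_le, le_div_iff₀ hα]
  exact key

lemma h_one (α : ℝ) : h α 1 = log 2 / α := by
  simp [h]

lemma log_two_div_sqrt_two_gt : log 2 / √2 > 0.390 := by
  have hsqrt : √2 < 1.415 := (sqrt_lt' (by norm_num)).mpr (by norm_num)
  rw [gt_iff_lt, lt_div_iff₀ (by positivity)]
  nlinarith [log_two_gt_d9]

theorem stmt_13 :
    (∀ α : ℝ, Real.sqrt 2 < α → h α (γopt α) ≥ 0.390) ∧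
    (∀ α : ℝ, 0 < α → α ≤ Real.sqrt 2 →
      h α 1 = Real.log 2 / α ∧ Real.log 2 / α ≥ Real.log 2 / Real.sqrt 2 ∧
      Real.log 2 / Real.sqrt 2 > 0.390) := by
  refine ⟨fun α hα => ?_, fun α hα0 hα => ⟨h_one α, ?_, log_two_div_sqrt_two_gt⟩⟩
  · have hα0 : 0 < α := (sqrt_nonneg 2).trans_lt hα
    exact h_ge_of_sq_mul_mul_two_mul_sub_one hα0 (by linarith [half_le_γopt α])
      (sq_mul_γopt_mul_two_mul_γopt_sub_one hα0.ne')
  · have : 0 ≤ log 2 := log_nonneg one_le_two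
    gcongr
end

section
/- For every p ∈ (0,1], ∫₀¹ √(p(1-x) + 1-p) dx = (2/(3p))·(1 − (1-p)^{3/2}), and hence (2/(3√p))·(1 − (1-p)^{3/2}) is the corresponding regret coefficient; its maximum over p ∈ (0,1] exceeds 0.68 and is attained near p ≈ 0.866. -/
/-! Substituting `y = 1 - p x` turns the integral into `p⁻¹ ∫_{1-p}^1 √y dy`.
For the maximisation write `q = 1 - u²` with `u ∈ [0, 1)`: the squared coefficient becomes
`4 (1 - u³)² / (9 (1 - u²))`, and `9 (2√3 - 3)(1 - u²) - 4 (1 - u³)²` factors as `1 - u` times a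
square vanishing at `u₀ = (√3 - 1)/2` times a cubic with positive coefficients. So the maximum
`√(2√3 - 3) ≈ 0.681` is attained at `q = 1 - u₀² = √3/2 ≈ 0.866`. -/

open Real Set

theorem integral_sqrt_one_sub_mul {p : ℝ} (hp : p ≠ 0) :
    ∫ x in (0:ℝ)..1, √(1 - p * x) = 2 / (3 * p) * (1 - (1 - p) ^ ((3:ℝ) / 2)) := by
  simp_rw [sqrt_eq_rpow]
  rw [intervalIntegral.integral_comp_sub_mul (fun y => y ^ (1 / (2:ℝ))) hp,
    integral_rpow (Or.inl (by norm_num))]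
  norm_num
  field_simp

noncomputable def regretCoeff (p : ℝ) : ℝ :=
  2 / (3 * √p) * (1 - (1 - p) ^ ((3:ℝ) / 2))

theorem regretCoeff_nonneg {q : ℝ} (hq₀ : 0 ≤ q) (hq₁ : q ≤ 1) : 0 ≤ regretCoeff q := by
  have : 0 ≤ 1 - (1 - q) ^ ((3:ℝ) / 2) :=
    sub_nonneg.2 (rpow_le_one (by linarith) (by linarith) (by norm_num))
  unfold regretCoeff
  positivity

theorem sq_regretCoeff_one_sub_sq {u : ℝ} (hu₀ : 0 ≤ u) (hu₁ : u < 1) :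
    regretCoeff (1 - u ^ 2) ^ 2 = 4 * (1 - u ^ 3) ^ 2 / (9 * (1 - u ^ 2)) := by
  have hcube : (u ^ 2) ^ ((3:ℝ) / 2) = u ^ 3 := by
    rw [← rpow_natCast, ← rpow_mul hu₀]
    norm_num
  have hpos : 0 ≤ 1 - u ^ 2 := by nlinarith
  rw [regretCoeff, sub_sub_cancel, hcube, mul_pow, div_pow, mul_pow, sq_sqrt hpos]
  ring

theorem regret_gap_factorization (u : ℝ) :
    9 * (2 * √3 - 3) * (1 - u ^ 2) - 4 * (1 - u ^ 3) ^ 2 =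
      (1 - u) * (u - (√3 - 1) / 2) ^ 2 *
        (4 * u ^ 3 + 4 * √3 * u ^ 2 + (12 - 2 * √3) * u + (10 * √3 - 16)) := by
  have h3 : √3 ^ 2 = 3 := sq_sqrt (by norm_num)
  linear_combination
    (-4 * u ^ 4 + 4 * u ^ 3 - 9 * u ^ 2 + 4 * u + 5 - (1 - u) *
      (4 * u ^ 3 + 4 * √3 * u ^ 2 + (12 - 2 * √3) * u + (10 * √3 - 16)) / 4) * h3

theorem sqrt_three_mem_Ioo : √3 ∈ Ioo (1.7313 : ℝ) 1.7321 :=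
  ⟨(lt_sqrt (by norm_num)).2 (by norm_num), (sqrt_lt' (by norm_num)).2 (by norm_num)⟩

theorem four_mul_one_sub_pow_three_sq_le {u : ℝ} (hu₀ : 0 ≤ u) (hu₁ : u ≤ 1) :
    4 * (1 - u ^ 3) ^ 2 ≤ 9 * (2 * √3 - 3) * (1 - u ^ 2) := by
  obtain ⟨h3₀, h3₁⟩ := sqrt_three_mem_Ioo
  have hcubic : 0 ≤ 4 * u ^ 3 + 4 * √3 * u ^ 2 + (12 - 2 * √3) * u + (10 * √3 - 16) := by
    have : 0 ≤ (12 - 2 * √3) * u := mul_nonneg (by linarith) hu₀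
    have : 0 ≤ 4 * √3 * u ^ 2 := by positivity
    have : 0 ≤ 4 * u ^ 3 := by positivity
    linarith
  have h1u : 0 ≤ 1 - u := by linarith
  rw [← sub_nonneg, regret_gap_factorization]
  positivity

theorem sq_regretCoeff_le {q : ℝ} (hq : q ∈ Ioc 0 1) : regretCoeff q ^ 2 ≤ 2 * √3 - 3 := by
  obtain ⟨hq₀, hq₁⟩ := hq
  set u := √(1 - q)
  have hu₀ : 0 ≤ u := sqrt_nonneg _
  have hq : q = 1 - u ^ 2 := by rw [sq_sqrt (by linarith)]; ring
  have hu₁ : u < 1 := by nlinarith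
  rw [hq, sq_regretCoeff_one_sub_sq hu₀ hu₁, div_le_iff₀ (by nlinarith)]
  linarith [four_mul_one_sub_pow_three_sq_le hu₀ hu₁.le]

theorem sq_regretCoeff_sqrt_three_div_two : regretCoeff (√3 / 2) ^ 2 = 2 * √3 - 3 := by
  obtain ⟨h3₀, h3₁⟩ := sqrt_three_mem_Ioo
  have hgap := regret_gap_factorization ((√3 - 1) / 2)
  simp only [sub_self, zero_pow two_ne_zero, mul_zero, zero_mul, sub_eq_zero] at hgap
  have hq : √3 / 2 = 1 - ((√3 - 1) / 2) ^ 2 := by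
    linear_combination (1 / 4 : ℝ) * sq_sqrt (show (0:ℝ) ≤ 3 by norm_num)
  rw [hq, sq_regretCoeff_one_sub_sq (by linarith) (by linarith), div_eq_iff (by nlinarith)]
  linarith

theorem regretCoeff_le_regretCoeff_sqrt_three_div_two {q : ℝ} (hq : q ∈ Ioc 0 1) :
    regretCoeff q ≤ regretCoeff (√3 / 2) := by
  obtain ⟨h3₀, h3₁⟩ := sqrt_three_mem_Ioo
  rw [← pow_le_pow_iff_left₀ (regretCoeff_nonneg hq.1.le hq.2)
    (regretCoeff_nonneg (by positivity) (by linarith)) two_ne_zero,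
    sq_regretCoeff_sqrt_three_div_two]
  exact sq_regretCoeff_le hq

theorem lt_regretCoeff_sqrt_three_div_two : 0.68 < regretCoeff (√3 / 2) := by
  obtain ⟨h3₀, h3₁⟩ := sqrt_three_mem_Ioo
  rw [← pow_lt_pow_iff_left₀ (by norm_num) (regretCoeff_nonneg (by positivity) (by linarith))
    two_ne_zero, sq_regretCoeff_sqrt_three_div_two]
  linarith

theorem stmt_15 :
    (∀ p : ℝ, p ∈ Set.Ioc (0:ℝ) 1 →
      ∫ x in (0:ℝ)..1, Real.sqrt (p * (1 - x) + 1 - p) =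
        (2 / (3 * p)) * (1 - (1 - p) ^ ((3:ℝ)/2))) ∧
    (∃ p₀ ∈ Set.Ioc (0:ℝ) 1,
      (∀ q ∈ Set.Ioc (0:ℝ) 1,
        (2 / (3 * Real.sqrt q)) * (1 - (1 - q) ^ ((3:ℝ)/2)) ≤
          (2 / (3 * Real.sqrt p₀)) * (1 - (1 - p₀) ^ ((3:ℝ)/2))) ∧
      (2 / (3 * Real.sqrt p₀)) * (1 - (1 - p₀) ^ ((3:ℝ)/2)) > 0.68 ∧
      |p₀ - 0.866| < 0.01) := by
  obtain ⟨h3₀, h3₁⟩ := sqrt_three_mem_Ioo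
  refine ⟨fun p hp => ?_, √3 / 2, ⟨by positivity, by linarith⟩,
    fun q hq => regretCoeff_le_regretCoeff_sqrt_three_div_two hq,
    lt_regretCoeff_sqrt_three_div_two, abs_sub_lt_iff.2 ⟨by linarith, by linarith⟩⟩
  simp only [show ∀ x, p * (1 - x) + 1 - p = 1 - p * x from fun x => by ring]
  exact integral_sqrt_one_sub_mul hp.1.ne'
end
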